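/- arXiv:1310.4048 — 10 statements merged into one kernel-verified Lean document; each statement's English description precedes it below -/
import Mathlib

section
/- Let P be a contraction on a Hilbert space H and suppose ρ(αS, α²P) ≥ 0 for all α in the closed unit disc, where ρ(S,P) = 2(I - P*P) - (S - S*P) - (S* - P*S). If F is an operator on 𝒟_P satisfying S - S*P = D_P F D_P, then the numerical radius of F is at most 1. -/
/-!
For `|α| = 1` the defining expression collapses to `ρ(αS, α²P) = 2 D_P² - (αT + (αT)*)` with
`T = S - S*P = D_P F D_P`. Evaluating its quadratic form at `y` gives
`0 ≤ 2‖D_P y‖² - 2 Re (ᾱ ⟨F D_P y, D_P y⟩)`, and rotating `α` so that the last term is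
`|⟨F D_P y, D_P y⟩|` bounds the numerical range of `F` on `Ran D_P`; the bound passes to the
closure by continuity.
-/

open scoped InnerProductSpace
open ContinuousLinearMap

section

variable {H : Type*} [NormedAddCommGroup H] [InnerProductSpace ℂ H]

theorem isClosed_setOf_norm_inner_apply_self_le (G : H →L[ℂ] H) :
    IsClosed {z : H | ‖⟪G z, z⟫_ℂ‖ ≤ ‖z‖ ^ 2} :=
  isClosed_le (G.continuous.inner continuous_id).norm (continuous_norm.pow 2)

variable [CompleteSpace H]

noncomputable def rho (S P : H →L[ℂ] H) : H →L[ℂ] H :=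
  (2 : ℂ) • (1 - adjoint P ∘L P) - (S - adjoint S ∘L P) - (adjoint S - adjoint P ∘L S)

theorem rho_smul_of_norm_eq_one (S P : H →L[ℂ] H) {α : ℂ} (hα : ‖α‖ = 1) :
    rho (α • S) (α ^ 2 • P) = (2 : ℂ) • (1 - adjoint P ∘L P)
      - (α • (S - adjoint S ∘L P) + adjoint (α • (S - adjoint S ∘L P))) := by
  have hconj : α * starRingEnd ℂ α = 1 := by
    rw [Complex.mul_conj', hα]; norm_num
  have h₁ : α ^ 2 * starRingEnd ℂ α ^ 2 = 1 := by rw [← mul_pow, hconj, one_pow]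
  have h₂ : α ^ 2 * starRingEnd ℂ α = α := by linear_combination α * hconj
  have h₃ : α * starRingEnd ℂ α ^ 2 = starRingEnd ℂ α := by
    linear_combination starRingEnd ℂ α * hconj
  simp only [rho, map_smulₛₗ, map_sub, adjoint_comp, adjoint_adjoint, smul_comp, comp_smul,
    smul_smul, map_pow, h₁, h₂, h₃]
  module

theorem re_inner_add_adjoint_apply_self (A : H →L[ℂ] H) (y : H) :
    RCLike.re ⟪(A + adjoint A) y, y⟫_ℂ = 2 * RCLike.re ⟪A y, y⟫_ℂ := by
  rw [add_apply, inner_add_left, adjoint_inner_left, ← inner_conj_symm, map_add,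
    RCLike.conj_re, two_mul]

theorem norm_inner_apply_self_le_of_isPositive {D G : H →L[ℂ] H} (hD : D.IsSymmetric)
    (h : ∀ α : ℂ, ‖α‖ = 1 →
      ((2 : ℂ) • (D ∘L D) - (α • (D ∘L G ∘L D) + adjoint (α • (D ∘L G ∘L D)))).IsPositive)
    (y : H) : ‖⟪G (D y), D y⟫_ℂ‖ ≤ ‖D y‖ ^ 2 := by
  have hD' : ∀ x z, ⟪D x, z⟫_ℂ = ⟪x, D z⟫_ℂ := hD
  set t := ⟪G (D y), D y⟫_ℂ
  obtain ⟨α, hα, ht⟩ := Complex.exists_norm_eq_mul_self t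
  have hDD : RCLike.re ⟪(D ∘L D) y, y⟫_ℂ = ‖D y‖ ^ 2 := by
    rw [← inner_self_eq_norm_sq (𝕜 := ℂ), comp_apply, hD']
  have hDGD : RCLike.re ⟪(starRingEnd ℂ α • (D ∘L G ∘L D)) y, y⟫_ℂ = ‖t‖ := by
    rw [smul_apply, inner_smul_left, Complex.conj_conj, comp_apply, hD', comp_apply, ← ht]
    exact Complex.ofReal_re _
  have hpos := (h (starRingEnd ℂ α) (by rwa [Complex.norm_conj])).2 y
  rw [reApplyInnerSelf, sub_apply, inner_sub_left, map_sub, re_inner_add_adjoint_apply_self,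
    hDGD, smul_apply, inner_smul_left, map_ofNat, RCLike.ofNat_mul_re, hDD] at hpos
  linarith

end

theorem fundamental_operator_numRadius_le_one_general
    {H : Type*} [NormedAddCommGroup H] [InnerProductSpace ℂ H] [CompleteSpace H]
    (S P DP F : H →L[ℂ] H)
    (hDPpos : DP.IsPositive)
    (hDP : DP ∘L DP = 1 - adjoint P ∘L P)
    (hρ : ∀ α : ℂ, ‖α‖ ≤ 1 →
      ((2 : ℂ) • (1 - adjoint (α ^ 2 • P) ∘L (α ^ 2 • P))
        - ((α • S) - adjoint (α • S) ∘L (α ^ 2 • P))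
        - (adjoint (α • S) - adjoint (α ^ 2 • P) ∘L (α • S))).IsPositive)
    (hF : S - adjoint S ∘L P = DP ∘L F ∘L DP) :
    ∀ x ∈ closure (Set.range DP), ‖x‖ ≤ 1 → ‖(⟪F x, x⟫_ℂ : ℂ)‖ ≤ 1 := by
  intro x hx hx1
  have hρ_unit : ∀ α : ℂ, ‖α‖ = 1 → ((2 : ℂ) • (DP ∘L DP)
      - (α • (DP ∘L F ∘L DP) + adjoint (α • (DP ∘L F ∘L DP)))).IsPositive := by
    intro α hα
    have h : (rho (α • S) (α ^ 2 • P)).IsPositive := hρ α hα.le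
    rwa [rho_smul_of_norm_eq_one S P hα, ← hDP, hF] at h
  have hrange : Set.range DP ⊆ {z : H | ‖⟪F z, z⟫_ℂ‖ ≤ ‖z‖ ^ 2} := by
    rintro _ ⟨y, rfl⟩
    exact norm_inner_apply_self_le_of_isPositive hDPpos.isSymmetric hρ_unit y
  calc ‖⟪F x, x⟫_ℂ‖ ≤ ‖x‖ ^ 2 :=
        closure_minimal hrange (isClosed_setOf_norm_inner_apply_self_le F) hx
    _ ≤ 1 := pow_le_one₀ (norm_nonneg x) hx1

theorem fundamental_operator_numRadius_le_one
    {H : Type*} [NormedAddCommGroup H] [InnerProductSpace ℂ H] [CompleteSpace H]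
    (S P DP F : H →L[ℂ] H)
    (hcomm : S ∘L P = P ∘L S) (hP : ‖P‖ ≤ 1)
    (hDPpos : DP.IsPositive)
    (hDP : DP ∘L DP = 1 - adjoint P ∘L P)
    (hρ : ∀ α : ℂ, ‖α‖ ≤ 1 →
      ((2 : ℂ) • (1 - adjoint (α ^ 2 • P) ∘L (α ^ 2 • P))
        - ((α • S) - adjoint (α • S) ∘L (α ^ 2 • P))
        - (adjoint (α • S) - adjoint (α ^ 2 • P) ∘L (α • S))).IsPositive)
    (hF : S - adjoint S ∘L P = DP ∘L F ∘L DP) :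
    ∀ x ∈ closure (Set.range DP), ‖x‖ ≤ 1 → ‖(⟪F x, x⟫_ℂ : ℂ)‖ ≤ 1 :=
  fundamental_operator_numRadius_le_one_general S P DP F hDPpos hDP hρ hF
end

section
/- Let A be a bounded operator on a Hilbert space E with numerical radius ω(A) ≤ 1. Then for every z in the closed unit disc, ‖A* + Az‖ ≤ 2. -/
open scoped InnerProductSpace

/-- The numerical radius of a bounded operator. -/
noncomputable def numRadius {E : Type*} [NormedAddCommGroup E] [InnerProductSpace ℂ E]
    (T : E →L[ℂ] E) : ℝ :=
  sSup {r : ℝ | ∃ x : E, ‖x‖ ≤ 1 ∧ r = ‖(⟪T x, x⟫_ℂ : ℂ)‖}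

/-!
For unimodular `u = w ^ 2` we have `A† + u • A = w • (T + T†)` with `T = w • A`. The operator
`T + T†` is self-adjoint, so its norm is the supremum of `|re ⟪(T + T†) x, x⟫| = 2 |re ⟪T x, x⟫|`
over unit vectors, which is at most `2 ω(T) = 2 ω(A)`. The bound on the whole closed disc then
follows from the maximum modulus principle for the affine operator-valued map `z ↦ A† + z • A`.
-/

open ContinuousLinearMap RCLike Metric
open scoped Pointwise ComplexConjugate

theorem ContinuousLinearMap.norm_le_of_isSymmetric_of_abs_re_inner_le {𝕜 E : Type*} [RCLike 𝕜]
    [NormedAddCommGroup E] [InnerProductSpace 𝕜 E] {T : E →L[𝕜] E} (hT : T.IsSymmetric)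
    {C : ℝ} (hC : 0 ≤ C) (h : ∀ x, |re (inner 𝕜 (T x) x)| ≤ C * ‖x‖ ^ 2) : ‖T‖ ≤ C := by
  rw [T.norm_eq_iSup_rayleighQuotient hT]
  refine ciSup_le fun x => ?_
  rcases eq_or_ne x 0 with rfl | hx
  · simpa using hC
  rw [rayleighQuotient, reApplyInnerSelf_apply, abs_div, abs_sq, div_le_iff₀ (by positivity)]
  exact h x

section NumRadius

variable {E : Type*} [NormedAddCommGroup E] [InnerProductSpace ℂ E]

theorem norm_inner_apply_self_le_numRadius (T : E →L[ℂ] E) {x : E} (hx : ‖x‖ ≤ 1) :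
    ‖⟪T x, x⟫_ℂ‖ ≤ numRadius T := by
  refine le_csSup ⟨‖T‖, ?_⟩ ⟨x, hx, rfl⟩
  rintro _ ⟨y, hy, rfl⟩
  calc ‖⟪T y, y⟫_ℂ‖ ≤ ‖T y‖ * ‖y‖ := norm_inner_le_norm _ _
    _ ≤ ‖T‖ * 1 := mul_le_mul (T.unit_le_opNorm y hy) hy (norm_nonneg y) T.opNorm_nonneg
    _ = ‖T‖ := mul_one _

theorem numRadius_nonneg (T : E →L[ℂ] E) : 0 ≤ numRadius T :=
  (norm_nonneg _).trans (norm_inner_apply_self_le_numRadius T (x := 0) (by simp))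

theorem norm_inner_apply_smul_self (T : E →L[ℂ] E) (c : ℂ) (x : E) :
    ‖⟪T (c • x), c • x⟫_ℂ‖ = ‖c‖ ^ 2 * ‖⟪T x, x⟫_ℂ‖ := by
  simp only [map_smul, inner_smul_left, inner_smul_right, norm_mul, RCLike.norm_conj]
  ring

theorem norm_inner_apply_self_le_numRadius_mul_sq (T : E →L[ℂ] E) (x : E) :
    ‖⟪T x, x⟫_ℂ‖ ≤ numRadius T * ‖x‖ ^ 2 := by
  rcases eq_or_ne x 0 with rfl | hx
  · simp
  have hx' : 0 < ‖x‖ := norm_pos_iff.mpr hx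
  have hunit : ‖((‖x‖⁻¹ : ℝ) : ℂ) • x‖ = 1 := by
    rw [norm_smul, Complex.norm_real, norm_inv, norm_norm, inv_mul_cancel₀ hx'.ne']
  have := norm_inner_apply_self_le_numRadius T hunit.le
  rw [norm_inner_apply_smul_self, Complex.norm_real, norm_inv, norm_norm, inv_pow,
    inv_mul_le_iff₀ (by positivity)] at this
  linarith

theorem numRadius_smul (c : ℂ) (T : E →L[ℂ] E) : numRadius (c • T) = ‖c‖ * numRadius T := by
  have : {r : ℝ | ∃ x : E, ‖x‖ ≤ 1 ∧ r = ‖⟪(c • T) x, x⟫_ℂ‖} =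
      ‖c‖ • {r : ℝ | ∃ x : E, ‖x‖ ≤ 1 ∧ r = ‖⟪T x, x⟫_ℂ‖} := by
    ext r
    simp only [Set.mem_ofPred_eq, Set.mem_smul_set, smul_apply, inner_smul_left, norm_mul,
      RCLike.norm_conj, smul_eq_mul]
    constructor
    · rintro ⟨x, hx, rfl⟩
      exact ⟨_, ⟨x, hx, rfl⟩, rfl⟩
    · rintro ⟨_, ⟨x, hx, rfl⟩, rfl⟩
      exact ⟨x, hx, rfl⟩
  rw [numRadius, numRadius, this, Real.sSup_smul_of_nonneg (norm_nonneg c), smul_eq_mul]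

variable [CompleteSpace E]

theorem norm_add_adjoint_le_two_mul_numRadius (T : E →L[ℂ] E) :
    ‖T + adjoint T‖ ≤ 2 * numRadius T := by
  refine norm_le_of_isSymmetric_of_abs_re_inner_le
    (IsSelfAdjoint.add_star_self T).isSymmetric (by linarith [numRadius_nonneg T]) fun x => ?_
  have hre : re ⟪(T + adjoint T) x, x⟫_ℂ = 2 * re ⟪T x, x⟫_ℂ := by
    rw [add_apply, inner_add_left, adjoint_inner_left, map_add, inner_re_symm]
    ring
  calc |re ⟪(T + adjoint T) x, x⟫_ℂ| = 2 * |re ⟪T x, x⟫_ℂ| := by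
        rw [hre, abs_mul, abs_two]
    _ ≤ 2 * (numRadius T * ‖x‖ ^ 2) := by
        gcongr
        exact (abs_re_le_norm _).trans (norm_inner_apply_self_le_numRadius_mul_sq T x)
    _ = 2 * numRadius T * ‖x‖ ^ 2 := by ring

theorem norm_adjoint_add_smul_le_two_mul_numRadius_of_norm_eq_one (A : E →L[ℂ] E) {u : ℂ}
    (hu : ‖u‖ = 1) : ‖adjoint A + u • A‖ ≤ 2 * numRadius A := by
  obtain ⟨w, rfl⟩ : ∃ w : ℂ, w ^ 2 = u := IsAlgClosed.exists_pow_nat_eq u two_pos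
  have hw : ‖w‖ = 1 := by
    rwa [norm_pow, pow_eq_one_iff_of_nonneg (norm_nonneg w) two_ne_zero] at hu
  have hconj : w * conj w = 1 := by
    rw [RCLike.mul_conj, hw, ofReal_one, one_pow]
  have hrot : adjoint A + w ^ 2 • A = w • (w • A + adjoint (w • A)) := by
    rw [map_smulₛₗ, smul_add, smul_smul, smul_smul, hconj, one_smul, sq, add_comm]
  calc ‖adjoint A + w ^ 2 • A‖ = ‖w • A + adjoint (w • A)‖ := by
        rw [hrot, norm_smul, hw, one_mul]
    _ ≤ 2 * numRadius (w • A) := norm_add_adjoint_le_two_mul_numRadius _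
    _ = 2 * numRadius A := by rw [numRadius_smul, hw, one_mul]

theorem norm_adjoint_add_smul_le_two_mul_numRadius (A : E →L[ℂ] E) {z : ℂ} (hz : ‖z‖ ≤ 1) :
    ‖adjoint A + z • A‖ ≤ 2 * numRadius A := by
  refine Complex.norm_le_of_forall_mem_frontier_norm_le (f := fun z : ℂ => adjoint A + z • A)
    (U := ball 0 1) isBounded_ball (Differentiable.diffContOnCl (by fun_prop)) (fun u hu => ?_) ?_
  · rw [frontier_ball 0 one_ne_zero, mem_sphere_zero_iff_norm] at hu
    exact norm_adjoint_add_smul_le_two_mul_numRadius_of_norm_eq_one A hu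
  · rwa [closure_ball 0 one_ne_zero, mem_closedBall_zero_iff]

end NumRadius

theorem norm_adjoint_add_smul_le_two
    {E : Type*} [NormedAddCommGroup E] [InnerProductSpace ℂ E] [CompleteSpace E]
    (A : E →L[ℂ] E) (hA : numRadius A ≤ 1) :
    ∀ z : ℂ, ‖z‖ ≤ 1 → ‖ContinuousLinearMap.adjoint A + z • A‖ ≤ 2 := fun z hz => by
  linarith [norm_adjoint_add_smul_le_two_mul_numRadius A hz]
end

section
/- Let T₁ be a contraction on a Hilbert space H₁, T₂ a contraction on H₂, and X : H₂ → H₁ a bounded operator. If there exists a contraction C : H₂ → H₁ such that X = (I - T₁T₁*)^{1/2} C (I - T₂*T₂)^{1/2}, then the block operator matrix [[T₁, X],[0, T₂]] on H₁ ⊕ H₂ is a contraction. -/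
open ContinuousLinearMap
open scoped InnerProductSpace

/-! The block matrix sends `(x, y)` to `(T₁ x + D₁ (C (D₂ y)), T₂ y)`. Since `D₁² = 1 - T₁T₁*`,
the column `v ↦ (T₁* v, D₁ v)` is an isometry, so its adjoint, the row `(x, w) ↦ T₁ x + D₁ w`, is a
contraction; likewise `D₂² = 1 - T₂*T₂` makes `y ↦ (D₂ y, T₂ y)` an isometry. Hence
`‖T₁ x + D₁ C D₂ y‖² + ‖T₂ y‖² ≤ ‖x‖² + ‖C D₂ y‖² + ‖T₂ y‖² ≤ ‖x‖² + ‖D₂ y‖² + ‖T₂ y‖² = ‖x‖² + ‖y‖²`. -/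

section

variable {𝕜 E F G : Type*} [RCLike 𝕜]
  [NormedAddCommGroup E] [InnerProductSpace 𝕜 E] [CompleteSpace E]
  [NormedAddCommGroup F] [InnerProductSpace 𝕜 F] [CompleteSpace F]
  [NormedAddCommGroup G] [InnerProductSpace 𝕜 G] [CompleteSpace G]

theorem norm_apply_sq_add_norm_defect_apply_sq {S : E →L[𝕜] F} {D : E →L[𝕜] E}
    (hD : IsSelfAdjoint D) (hDS : D ∘L D = 1 - adjoint S ∘L S) (v : E) :
    ‖S v‖ ^ 2 + ‖D v‖ ^ 2 = ‖v‖ ^ 2 := by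
  rw [apply_norm_sq_eq_inner_adjoint_left S, apply_norm_sq_eq_inner_adjoint_left D,
    hD.adjoint_eq, hDS, sub_apply, inner_sub_left, map_sub, one_apply_eq_self,
    inner_self_eq_norm_sq (𝕜 := 𝕜)]
  ring

theorem norm_add_apply_sq_le_of_norm_adjoint_sq_add_le {T : E →L[𝕜] F} {D : G →L[𝕜] F}
    (h : ∀ v, ‖adjoint T v‖ ^ 2 + ‖adjoint D v‖ ^ 2 ≤ ‖v‖ ^ 2) (x : E) (w : G) :
    ‖T x + D w‖ ^ 2 ≤ ‖x‖ ^ 2 + ‖w‖ ^ 2 := by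
  set v := T x + D w
  have hv : ‖v‖ ^ 2 ≤ ‖x‖ * ‖adjoint T v‖ + ‖w‖ * ‖adjoint D v‖ :=
    calc ‖v‖ ^ 2 = RCLike.re ⟪x, adjoint T v⟫_𝕜 + RCLike.re ⟪w, adjoint D v⟫_𝕜 := by
          rw [← inner_self_eq_norm_sq (𝕜 := 𝕜), adjoint_inner_right, adjoint_inner_right,
            ← map_add, ← inner_add_left]
      _ ≤ ‖x‖ * ‖adjoint T v‖ + ‖w‖ * ‖adjoint D v‖ :=
          add_le_add (re_inner_le_norm _ _) (re_inner_le_norm _ _)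
  -- Cauchy–Schwarz in ℝ² on the right-hand side of `hv`, then divide by `‖v‖`.
  nlinarith [h v, sq_nonneg (‖x‖ * ‖adjoint D v‖ - ‖w‖ * ‖adjoint T v‖),
    sq_nonneg (‖v‖ ^ 2 - (‖x‖ ^ 2 + ‖w‖ ^ 2))]

end

theorem block_triangular_contraction_of_DMP_general
    {H₁ H₂ : Type*} [NormedAddCommGroup H₁] [InnerProductSpace ℂ H₁] [CompleteSpace H₁]
    [NormedAddCommGroup H₂] [InnerProductSpace ℂ H₂] [CompleteSpace H₂]
    (T₁ D₁ : H₁ →L[ℂ] H₁) (T₂ D₂ : H₂ →L[ℂ] H₂) (X C : H₂ →L[ℂ] H₁)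
    (hC : ‖C‖ ≤ 1)
    (hD₁pos : D₁.IsPositive) (hD₁ : D₁ ∘L D₁ = 1 - T₁ ∘L adjoint T₁)
    (hD₂pos : D₂.IsPositive) (hD₂ : D₂ ∘L D₂ = 1 - adjoint T₂ ∘L T₂)
    (hX : X = D₁ ∘L C ∘L D₂) :
    ‖((WithLp.prodContinuousLinearEquiv 2 ℂ H₁ H₂).symm.toContinuousLinearMap ∘L
        ((T₁ ∘L fst ℂ H₁ H₂ + X ∘L snd ℂ H₁ H₂).prod (T₂ ∘L snd ℂ H₁ H₂)) ∘L
        (WithLp.prodContinuousLinearEquiv 2 ℂ H₁ H₂).toContinuousLinearMap)‖ ≤ 1 := by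
  refine opNorm_le_bound _ zero_le_one fun p => ?_
  rw [one_mul, ← pow_le_pow_iff_left₀ (norm_nonneg _) (norm_nonneg _) two_ne_zero,
    WithLp.prod_norm_sq_eq_of_L2, WithLp.prod_norm_sq_eq_of_L2]
  obtain ⟨x, y⟩ := p
  have hD₁sa := hD₁pos.isSelfAdjoint
  have row : ‖T₁ x + D₁ (C (D₂ y))‖ ^ 2 ≤ ‖x‖ ^ 2 + ‖C (D₂ y)‖ ^ 2 :=
    norm_add_apply_sq_le_of_norm_adjoint_sq_add_le (fun v => by
      rw [hD₁sa.adjoint_eq, norm_apply_sq_add_norm_defect_apply_sq hD₁sa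
        (by rwa [adjoint_adjoint])]) x _
  have hCy : ‖C (D₂ y)‖ ≤ ‖D₂ y‖ := (C.le_of_opNorm_le hC _).trans_eq (one_mul _)
  have col := norm_apply_sq_add_norm_defect_apply_sq hD₂pos.isSelfAdjoint hD₂ y
  simp only [hX, comp_apply, ContinuousLinearEquiv.coe_coe, WithLp.prodContinuousLinearEquiv_apply,
    ContinuousLinearMap.prod_apply, add_apply, coe_fst', coe_snd',
    WithLp.prodContinuousLinearEquiv_symm_apply, WithLp.toLp_fst, WithLp.toLp_snd]
  nlinarith [norm_nonneg (C (D₂ y))]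

theorem block_triangular_contraction_of_DMP
    {H₁ H₂ : Type*} [NormedAddCommGroup H₁] [InnerProductSpace ℂ H₁] [CompleteSpace H₁]
    [NormedAddCommGroup H₂] [InnerProductSpace ℂ H₂] [CompleteSpace H₂]
    (T₁ D₁ : H₁ →L[ℂ] H₁) (T₂ D₂ : H₂ →L[ℂ] H₂) (X C : H₂ →L[ℂ] H₁)
    (hT₁ : ‖T₁‖ ≤ 1) (hT₂ : ‖T₂‖ ≤ 1) (hC : ‖C‖ ≤ 1)
    (hD₁pos : D₁.IsPositive) (hD₁ : D₁ ∘L D₁ = 1 - T₁ ∘L adjoint T₁)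
    (hD₂pos : D₂.IsPositive) (hD₂ : D₂ ∘L D₂ = 1 - adjoint T₂ ∘L T₂)
    (hX : X = D₁ ∘L C ∘L D₂) :
    ‖((WithLp.prodContinuousLinearEquiv 2 ℂ H₁ H₂).symm.toContinuousLinearMap ∘L
        ((T₁ ∘L fst ℂ H₁ H₂ + X ∘L snd ℂ H₁ H₂).prod (T₂ ∘L snd ℂ H₁ H₂)) ∘L
        (WithLp.prodContinuousLinearEquiv 2 ℂ H₁ H₂).toContinuousLinearMap)‖ ≤ 1 :=
  block_triangular_contraction_of_DMP_general T₁ D₁ T₂ D₂ X C hC hD₁pos hD₁ hD₂pos hD₂ hX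
end

section
/- Let T₁, T₂ be contractions on Hilbert spaces H₁, H₂ and let X : H₂ → H₁ be bounded. If the block operator [[T₁, X],[0, T₂]] on H₁ ⊕ H₂ is a contraction, then there exists a contraction C : H₂ → H₁ such that X = (I - T₁T₁*)^{1/2} C (I - T₂*T₂)^{1/2}. -/
/-!
Since the block operator is a contraction, `‖T₁ a + X b‖² ≤ ‖a‖² + ‖D₂ b‖²` for all `a, b`.
Applying Cauchy–Schwarz to `⟪g, T₁ a + X b'⟫` with `a = ‖D₂ b‖² • T₁* g`,
`b' = conj ⟪g, X b⟫ • b`, and using `‖g‖² = ‖T₁* g‖² + ‖D₁ g‖²`, this becomes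
`|⟪g, X b⟫| ≤ ‖D₁ g‖ ‖D₂ b‖`. Douglas' factorization lemma then
gives `X = Y D₂` with `Y` vanishing on `(range D₂)ᗮ`; hence `Y* g` lies in the closure of
`range D₂`, where the bound on the form yields `‖Y* g‖ ≤ ‖D₁ g‖`. A second application gives
`Y* = V D₁` with `‖V‖ ≤ 1`, and `C = V*`.
-/

open ContinuousLinearMap
open scoped InnerProductSpace

section Block

variable {𝕜 E F E' F' : Type*} [RCLike 𝕜]
  [NormedAddCommGroup E] [NormedSpace 𝕜 E] [NormedAddCommGroup F] [NormedSpace 𝕜 F]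
  [NormedAddCommGroup E'] [NormedSpace 𝕜 E'] [NormedAddCommGroup F'] [NormedSpace 𝕜 F']

theorem norm_sq_add_norm_sq_le_of_L2_opNorm_le_one (A : E × F →L[𝕜] E') (B : E × F →L[𝕜] F')
    (h : ‖(WithLp.prodContinuousLinearEquiv 2 𝕜 E' F').symm.toContinuousLinearMap ∘L
      (A.prod B) ∘L (WithLp.prodContinuousLinearEquiv 2 𝕜 E F).toContinuousLinearMap‖ ≤ 1)
    (x : E × F) : ‖A x‖ ^ 2 + ‖B x‖ ^ 2 ≤ ‖x.1‖ ^ 2 + ‖x.2‖ ^ 2 := by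
  have hx := le_of_opNorm_le _ h (WithLp.toLp 2 x)
  rw [one_mul] at hx
  simpa [WithLp.prod_norm_sq_eq_of_L2] using pow_le_pow_left₀ (norm_nonneg _) hx 2

end Block

section Defect

variable {𝕜 E F : Type*} [RCLike 𝕜]
  [NormedAddCommGroup E] [InnerProductSpace 𝕜 E] [CompleteSpace E]
  [NormedAddCommGroup F] [InnerProductSpace 𝕜 F] [CompleteSpace F]

theorem norm_sq_apply_eq_of_comp_self_eq {D : E →L[𝕜] E} (hD : IsSelfAdjoint D)
    {T : E →L[𝕜] F} (h : D ∘L D = 1 - adjoint T ∘L T) (x : E) :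
    ‖D x‖ ^ 2 = ‖x‖ ^ 2 - ‖T x‖ ^ 2 := by
  rw [D.apply_norm_sq_eq_inner_adjoint_right, hD.adjoint_eq, h,
    T.apply_norm_sq_eq_inner_adjoint_right, sub_apply, one_apply_eq_self,
    inner_sub_right, map_sub, inner_self_eq_norm_sq]

end Defect

section RowContraction

variable {𝕜 E F F' G G' : Type*} [RCLike 𝕜]
  [NormedAddCommGroup E] [InnerProductSpace 𝕜 E] [CompleteSpace E]
  [NormedAddCommGroup F] [InnerProductSpace 𝕜 F] [CompleteSpace F]
  [NormedAddCommGroup F'] [NormedSpace 𝕜 F'] [NormedAddCommGroup G] [NormedSpace 𝕜 G] [NormedAddCommGroup G'] [NormedSpace 𝕜 G']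

theorem norm_inner_le_of_norm_add_sq_le {T : E →L[𝕜] F} {X : G →L[𝕜] F} {D₁ : F →L[𝕜] F'}
    {D₂ : G →L[𝕜] G'} (hD₁ : ∀ g, ‖D₁ g‖ ^ 2 = ‖g‖ ^ 2 - ‖adjoint T g‖ ^ 2)
    (hTX : ∀ a b, ‖T a + X b‖ ^ 2 ≤ ‖a‖ ^ 2 + ‖D₂ b‖ ^ 2) (g : F) (b : G) :
    ‖⟪g, X b⟫_𝕜‖ ≤ ‖D₁ g‖ * ‖D₂ b‖ := by
  set z := ⟪g, X b⟫_𝕜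
  set β := ‖D₂ b‖
  set Q := β ^ 2 * ‖adjoint T g‖ ^ 2 + ‖z‖ ^ 2
  set w := T ((β ^ 2 : 𝕜) • adjoint T g) + X ((starRingEnd 𝕜) z • b)
  have hw_inner : ⟪g, w⟫_𝕜 = (Q : 𝕜) := by
    simp only [w, Q, map_smul, inner_add_right, inner_smul_right, ← adjoint_inner_left,
      inner_self_eq_norm_sq_to_K]
    rw [RCLike.conj_mul]
    push_cast
    ring
  have hw_norm : ‖w‖ ^ 2 ≤ β ^ 2 * Q := by
    have ha : ‖(β ^ 2 : 𝕜) • adjoint T g‖ = β ^ 2 * ‖adjoint T g‖ := by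
      rw [norm_smul, norm_pow, RCLike.norm_ofReal, abs_norm]
    have hb : ‖D₂ ((starRingEnd 𝕜) z • b)‖ = ‖z‖ * β := by
      rw [map_smul, norm_smul, RCLike.norm_conj]
    calc ‖w‖ ^ 2 ≤ (β ^ 2 * ‖adjoint T g‖) ^ 2 + (‖z‖ * β) ^ 2 := by
          rw [← ha, ← hb]; exact hTX _ _
      _ = β ^ 2 * Q := by ring
  have hQ : Q ≤ ‖g‖ ^ 2 * β ^ 2 := by
    have hQ₀ : 0 ≤ Q := by positivity
    have hcs := norm_inner_le_norm (𝕜 := 𝕜) g w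
    rw [hw_inner, RCLike.norm_ofReal, abs_of_nonneg hQ₀] at hcs
    have : Q ^ 2 ≤ ‖g‖ ^ 2 * β ^ 2 * Q := by
      calc Q ^ 2 ≤ ‖g‖ ^ 2 * ‖w‖ ^ 2 := by rw [← mul_pow]; exact pow_le_pow_left₀ hQ₀ hcs 2
        _ ≤ ‖g‖ ^ 2 * β ^ 2 * Q := by rw [mul_assoc]; gcongr
    nlinarith [mul_nonneg (sq_nonneg ‖g‖) (sq_nonneg β)]
  have hz : ‖z‖ ^ 2 ≤ (‖D₁ g‖ * β) ^ 2 := by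
    rw [mul_pow, hD₁]
    nlinarith
  exact (pow_le_pow_iff_left₀ (norm_nonneg _) (by positivity) two_ne_zero).mp hz

end RowContraction

section Douglas

variable {𝕜 E F G : Type*} [RCLike 𝕜]
  [NormedAddCommGroup E] [NormedSpace 𝕜 E]
  [NormedAddCommGroup F] [InnerProductSpace 𝕜 F] [CompleteSpace F]
  [NormedAddCommGroup G] [NormedSpace 𝕜 G] [CompleteSpace G]

theorem exists_comp_eq_of_norm_le_mul_norm (D : E →L[𝕜] F) (X : E →L[𝕜] G) {c : ℝ}
    (hc : 0 ≤ c) (hX : ∀ v, ‖X v‖ ≤ c * ‖D v‖) :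
    ∃ Y : F →L[𝕜] G, ‖Y‖ ≤ c ∧ Y ∘L D = X ∧ D.rangeᗮ ≤ Y.ker := by
  set K := D.range.topologicalClosure
  let e : E →ₗ[𝕜] K :=
    (D : E →ₗ[𝕜] F).codRestrict K fun v ↦ D.range.le_topologicalClosure ⟨v, rfl⟩
  have he : DenseRange e := by
    rw [DenseRange, Subtype.dense_iff, ← Set.range_comp]
    exact (D.range.topologicalClosure_coe).subset
  set Z := (X : E →ₗ[𝕜] G).extendOfNorm e
  refine ⟨Z ∘L K.orthogonalProjectionOnto, ?_, ?_, fun w hw ↦ ?_⟩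
  · calc ‖Z ∘L K.orthogonalProjectionOnto‖ ≤ ‖Z‖ * ‖K.orthogonalProjectionOnto‖ :=
          opNorm_comp_le _ _
      _ ≤ c * 1 := mul_le_mul (LinearMap.opNorm_extendOfNorm_le he hc hX)
          K.orthogonalProjectionOnto_norm_le (norm_nonneg _) hc
      _ = c := mul_one c
  · ext v
    have : K.orthogonalProjectionOnto (D v) = e v :=
      K.orthogonalProjectionOnto_mem_subspace_eq_self (e v)
    rw [comp_apply, comp_apply, this]
    exact LinearMap.extendOfNorm_eq he ⟨c, hX⟩ v
  · rw [← Submodule.orthogonal_closure] at hw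
    rw [LinearMap.mem_ker, coe_coe, comp_apply,
      Submodule.orthogonalProjectionOnto_apply_of_mem_orthogonal hw, map_zero]

end Douglas

section Adjoint

variable {𝕜 F G : Type*} [RCLike 𝕜]
  [NormedAddCommGroup F] [InnerProductSpace 𝕜 F] [CompleteSpace F]
  [NormedAddCommGroup G] [InnerProductSpace 𝕜 G] [CompleteSpace G]

theorem norm_adjoint_apply_le_of_norm_inner_le {R : Submodule 𝕜 F} {Y : F →L[𝕜] G}
    (hY : Rᗮ ≤ Y.ker) (g : G) {c : ℝ} (hc : 0 ≤ c)
    (h : ∀ v ∈ R, ‖⟪g, Y v⟫_𝕜‖ ≤ c * ‖v‖) : ‖adjoint Y g‖ ≤ c := by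
  set u := adjoint Y g
  have hu : u ∈ R.topologicalClosure := by
    rw [← Submodule.orthogonal_orthogonal_eq_closure, Submodule.mem_orthogonal]
    intro w hw
    have hYw : Y w = 0 := hY hw
    rw [adjoint_inner_right, hYw, inner_zero_left]
  have hu_bound : ‖⟪g, Y u⟫_𝕜‖ ≤ c * ‖u‖ :=
    closure_minimal h (isClosed_le (continuous_const.inner Y.continuous).norm
      (continuous_const.mul continuous_norm))
      (by rwa [← Submodule.topologicalClosure_coe])
  have hu_sq : ‖u‖ ^ 2 ≤ c * ‖u‖ := by
    rwa [← adjoint_inner_left, inner_self_eq_norm_sq_to_K, norm_pow, RCLike.norm_ofReal,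
      abs_norm] at hu_bound
  nlinarith [norm_nonneg u]

end Adjoint

section Factorization

variable {𝕜 E F G : Type*} [RCLike 𝕜]
  [NormedAddCommGroup E] [NormedSpace 𝕜 E]
  [NormedAddCommGroup F] [InnerProductSpace 𝕜 F] [CompleteSpace F]
  [NormedAddCommGroup G] [InnerProductSpace 𝕜 G] [CompleteSpace G]

theorem exists_norm_le_one_and_eq_comp_comp_of_norm_inner_le {D₁ : F →L[𝕜] F}
    (hD₁ : IsSelfAdjoint D₁) (D₂ : E →L[𝕜] G) (X : E →L[𝕜] F)
    (hX : ∀ g b, ‖⟪g, X b⟫_𝕜‖ ≤ ‖D₁ g‖ * ‖D₂ b‖) :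
    ∃ C : G →L[𝕜] F, ‖C‖ ≤ 1 ∧ X = D₁ ∘L C ∘L D₂ := by
  have hXD₂ : ∀ b, ‖X b‖ ≤ ‖D₁‖ * ‖D₂ b‖ := fun b ↦ by
    have h := (hX (X b) b).trans
      (mul_le_mul_of_nonneg_right (D₁.le_opNorm (X b)) (norm_nonneg _))
    rw [inner_self_eq_norm_sq_to_K, norm_pow, RCLike.norm_ofReal, abs_norm,
      mul_right_comm] at h
    nlinarith [norm_nonneg (X b), mul_nonneg (norm_nonneg D₁) (norm_nonneg (D₂ b))]
  obtain ⟨Y, -, hYD₂, hYker⟩ := exists_comp_eq_of_norm_le_mul_norm D₂ X (norm_nonneg D₁) hXD₂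
  have hY : ∀ g, ‖adjoint Y g‖ ≤ 1 * ‖D₁ g‖ := fun g ↦ by
    rw [one_mul]
    refine norm_adjoint_apply_le_of_norm_inner_le hYker g (norm_nonneg _) ?_
    rintro _ ⟨b, rfl⟩
    change ‖⟪g, Y (D₂ b)⟫_𝕜‖ ≤ ‖D₁ g‖ * ‖D₂ b‖
    rw [← comp_apply Y D₂, hYD₂]
    exact hX g b
  obtain ⟨V, hV, hVD₁, -⟩ := exists_comp_eq_of_norm_le_mul_norm D₁ (adjoint Y) zero_le_one hY
  have hD₁V : D₁ ∘L adjoint V = Y := by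
    rw [← hD₁.adjoint_eq, ← adjoint_comp, hVD₁, adjoint_adjoint]
  exact ⟨adjoint V, by rwa [LinearIsometryEquiv.norm_map], by rw [← comp_assoc, hD₁V, hYD₂]⟩

end Factorization

theorem DMP_of_block_triangular_contraction_general
    {H₁ H₂ : Type*} [NormedAddCommGroup H₁] [InnerProductSpace ℂ H₁] [CompleteSpace H₁]
    [NormedAddCommGroup H₂] [InnerProductSpace ℂ H₂] [CompleteSpace H₂]
    (T₁ D₁ : H₁ →L[ℂ] H₁) (T₂ D₂ : H₂ →L[ℂ] H₂) (X : H₂ →L[ℂ] H₁)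
    (hD₁pos : D₁.IsPositive) (hD₁ : D₁ ∘L D₁ = 1 - T₁ ∘L adjoint T₁)
    (hD₂pos : D₂.IsPositive) (hD₂ : D₂ ∘L D₂ = 1 - adjoint T₂ ∘L T₂)
    (hblock :
      ‖((WithLp.prodContinuousLinearEquiv 2 ℂ H₁ H₂).symm.toContinuousLinearMap ∘L
          ((T₁ ∘L fst ℂ H₁ H₂ + X ∘L snd ℂ H₁ H₂).prod (T₂ ∘L snd ℂ H₁ H₂)) ∘L
          (WithLp.prodContinuousLinearEquiv 2 ℂ H₁ H₂).toContinuousLinearMap)‖ ≤ 1) :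
    ∃ C : H₂ →L[ℂ] H₁, ‖C‖ ≤ 1 ∧ X = D₁ ∘L C ∘L D₂ := by
  have hD₁_norm : ∀ g, ‖D₁ g‖ ^ 2 = ‖g‖ ^ 2 - ‖adjoint T₁ g‖ ^ 2 :=
    norm_sq_apply_eq_of_comp_self_eq hD₁pos.isSelfAdjoint (by rwa [adjoint_adjoint])
  have hD₂_norm : ∀ b, ‖D₂ b‖ ^ 2 = ‖b‖ ^ 2 - ‖T₂ b‖ ^ 2 :=
    norm_sq_apply_eq_of_comp_self_eq hD₂pos.isSelfAdjoint hD₂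
  have hrow : ∀ a b, ‖T₁ a + X b‖ ^ 2 ≤ ‖a‖ ^ 2 + ‖D₂ b‖ ^ 2 := fun a b ↦ by
    have hab := norm_sq_add_norm_sq_le_of_L2_opNorm_le_one _ _ hblock (a, b)
    simp only [add_apply, comp_apply, coe_fst', coe_snd'] at hab
    linarith [hD₂_norm b]
  exact exists_norm_le_one_and_eq_comp_comp_of_norm_inner_le hD₁pos.isSelfAdjoint D₂ X
    (norm_inner_le_of_norm_add_sq_le hD₁_norm hrow)

theorem DMP_of_block_triangular_contraction
    {H₁ H₂ : Type*} [NormedAddCommGroup H₁] [InnerProductSpace ℂ H₁] [CompleteSpace H₁]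
    [NormedAddCommGroup H₂] [InnerProductSpace ℂ H₂] [CompleteSpace H₂]
    (T₁ D₁ : H₁ →L[ℂ] H₁) (T₂ D₂ : H₂ →L[ℂ] H₂) (X : H₂ →L[ℂ] H₁)
    (hT₁ : ‖T₁‖ ≤ 1) (hT₂ : ‖T₂‖ ≤ 1)
    (hD₁pos : D₁.IsPositive) (hD₁ : D₁ ∘L D₁ = 1 - T₁ ∘L adjoint T₁)
    (hD₂pos : D₂.IsPositive) (hD₂ : D₂ ∘L D₂ = 1 - adjoint T₂ ∘L T₂)
    (hblock :
      ‖((WithLp.prodContinuousLinearEquiv 2 ℂ H₁ H₂).symm.toContinuousLinearMap ∘L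
          ((T₁ ∘L fst ℂ H₁ H₂ + X ∘L snd ℂ H₁ H₂).prod (T₂ ∘L snd ℂ H₁ H₂)) ∘L
          (WithLp.prodContinuousLinearEquiv 2 ℂ H₁ H₂).toContinuousLinearMap)‖ ≤ 1) :
    ∃ C : H₂ →L[ℂ] H₁, ‖C‖ ≤ 1 ∧ X = D₁ ∘L C ∘L D₂ :=
  DMP_of_block_triangular_contraction_general T₁ D₁ T₂ D₂ X hD₁pos hD₁ hD₂pos hD₂ hblock
end

section
/- Let P be a contraction on a Hilbert space H and let V on a Hilbert space K ⊇ H be the minimal isometric dilation of P. Then the defect spaces 𝒟_{P*} = closure Ran(I - PP*)^{1/2} and 𝒟_{V*} = closure Ran(I - VV*)^{1/2} are unitarily equivalent (have the same Hilbert space dimension). -/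
/-!
Minimality makes `V*` agree with `P*` on `H`, so `‖D_{V*} h‖ = ‖D_{P*} h‖` for `h ∈ H`. Since `V`
is an isometry, `D_{V*}` vanishes on `ran V`; as `H + ran V` is dense in `K` by minimality,
`D_{V*} H` is dense in `𝒟_{V*}`. The isometric correspondence `D_{P*} h ↦ D_{V*} h` between dense
subspaces therefore extends to a unitary `𝒟_{P*} ≃ 𝒟_{V*}`.
-/

open ContinuousLinearMap
open scoped InnerProductSpace

theorem LinearMap.denseRange_codRestrict_topologicalClosure_range {R X M : Type*} [Semiring R]
    [AddCommMonoid X] [Module R X] [AddCommMonoid M] [Module R M] [TopologicalSpace M]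
    [ContinuousAdd M] [ContinuousConstSMul R M] (f : X →ₗ[R] M) :
    DenseRange (f.codRestrict (range f).topologicalClosure
      fun x ↦ (range f).le_topologicalClosure (mem_range_self f x)) := by
  refine Subtype.dense_iff.mpr ?_
  rw [← Set.range_comp]
  exact subset_rfl

theorem LinearMap.nonempty_topologicalClosure_range_linearIsometryEquiv_of_norm_eq
    {𝕜 X E F : Type*} [NormedField 𝕜] [AddCommGroup X] [Module 𝕜 X]
    [NormedAddCommGroup E] [NormedSpace 𝕜 E] [CompleteSpace E]
    [NormedAddCommGroup F] [NormedSpace 𝕜 F] [CompleteSpace F]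
    (A : X →ₗ[𝕜] E) (B : X →ₗ[𝕜] F) (h : ∀ x, ‖B x‖ = ‖A x‖) :
    Nonempty ((range A).topologicalClosure ≃ₗᵢ[𝕜] (range B).topologicalClosure) :=
  -- `A` and `B` need not be injective: the norm identity alone makes the extension well defined.
  ⟨(LinearEquiv.refl 𝕜 X).extendOfIsometry _ _ A.denseRange_codRestrict_topologicalClosure_range
    B.denseRange_codRestrict_topologicalClosure_range h⟩

theorem IsSelfAdjoint.mul_eq_zero_of_mul_self_eq_one_sub_mul_star {A : Type*} [NormedRing A]
    [StarRing A] [CStarRing A] {d v : A} (hd : IsSelfAdjoint d) (hv : star v * v = 1)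
    (h : d * d = 1 - v * star v) : d * v = 0 := by
  rw [← CStarRing.star_mul_self_eq_zero_iff]
  calc star (d * v) * (d * v) = star v * (d * d) * v := by
        rw [star_mul, hd.star_eq]; noncomm_ring
    _ = star v * v - (star v * v) * (star v * v) := by rw [h]; noncomm_ring
    _ = 0 := by rw [hv, mul_one, sub_self]

section

variable {𝕜 K : Type*} [RCLike 𝕜] [NormedAddCommGroup K] [InnerProductSpace 𝕜 K]

theorem IsSelfAdjoint.norm_apply_sq_of_comp_self_eq_one_sub [CompleteSpace K] {D T : K →L[𝕜] K}
    (hD : IsSelfAdjoint D) (h : D ∘L D = 1 - T ∘L adjoint T) (x : K) :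
    ‖D x‖ ^ 2 = ‖x‖ ^ 2 - ‖adjoint T x‖ ^ 2 := by
  rw [apply_norm_sq_eq_inner_adjoint_left, apply_norm_sq_eq_inner_adjoint_left, adjoint_adjoint,
    hD.adjoint_eq, h, sub_apply, inner_sub_left, map_sub, one_apply_eq_self, inner_self_eq_norm_sq]

variable {H : Submodule 𝕜 K}

theorem adjoint_apply_coe_eq_of_minimal_dilation [CompleteSpace K] [CompleteSpace H]
    {P : H →L[𝕜] H} {V : K →L[𝕜] K}
    (hdil : ∀ (n : ℕ) (h : H), H.orthogonalProjectionOnto ((V ^ n) (h : K)) = (P ^ n) h)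
    (hmin : (Submodule.span 𝕜 {x : K | ∃ (n : ℕ) (h : H), x = (V ^ n) (h : K)}).topologicalClosure
      = ⊤)
    (h : H) : adjoint V h = adjoint P h := by
  have hdense := Submodule.dense_iff_topologicalClosure_eq_top.mpr hmin
  have hinner : innerSL 𝕜 (adjoint V h) = innerSL 𝕜 ((adjoint P h : H) : K) := by
    refine ext_on hdense ?_
    rintro _ ⟨n, h', rfl⟩
    calc ⟪adjoint V h, (V ^ n) h'⟫_𝕜 = ⟪(h : K), (V ^ (n + 1)) h'⟫_𝕜 := by
          rw [adjoint_inner_left, pow_succ', mul_apply_eq_comp]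
      _ = ⟪adjoint P h, (P ^ n) h'⟫_𝕜 := by
          rw [← Submodule.inner_orthogonalProjectionOnto_eq_of_mem_left, hdil, pow_succ',
            mul_apply_eq_comp, adjoint_inner_left]
      _ = ⟪((adjoint P h : H) : K), (V ^ n) h'⟫_𝕜 := by
          rw [← hdil, Submodule.inner_orthogonalProjectionOnto_eq_of_mem_left]
  exact ext_inner_right 𝕜 (DFunLike.congr_fun hinner)

theorem span_pow_apply_le_sup_range (V : K →L[𝕜] K) :
    Submodule.span 𝕜 {x : K | ∃ (n : ℕ) (h : H), x = (V ^ n) (h : K)} ≤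
      H ⊔ LinearMap.range (V : K →ₗ[𝕜] K) := by
  rw [Submodule.span_le]
  rintro _ ⟨_ | n, h, rfl⟩
  · exact Submodule.mem_sup_left (by simp)
  · exact Submodule.mem_sup_right ⟨(V ^ n) h, by rw [pow_succ', mul_apply_eq_comp]; rfl⟩

theorem topologicalClosure_map_eq_of_comp_eq_zero {D V : K →L[𝕜] K} (hDV : D ∘L V = 0)
    (hmin : (Submodule.span 𝕜 {x : K | ∃ (n : ℕ) (h : H), x = (V ^ n) (h : K)}).topologicalClosure
      = ⊤) :
    (H.map (D : K →ₗ[𝕜] K)).topologicalClosure =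
      (LinearMap.range (D : K →ₗ[𝕜] K)).topologicalClosure := by
  set S := Submodule.span 𝕜 {x : K | ∃ (n : ℕ) (h : H), x = (V ^ n) (h : K)}
  have hS : S.map (D : K →ₗ[𝕜] K) ≤ H.map (D : K →ₗ[𝕜] K) :=
    calc S.map (D : K →ₗ[𝕜] K) ≤ (H ⊔ LinearMap.range (V : K →ₗ[𝕜] K)).map (D : K →ₗ[𝕜] K) :=
          Submodule.map_mono (span_pow_apply_le_sup_range V)
      _ = H.map (D : K →ₗ[𝕜] K) := by
          rw [Submodule.map_sup, ← LinearMap.range_comp, ← toLinearMap_comp, hDV]; simp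
  refine le_antisymm (Submodule.topologicalClosure_mono LinearMap.map_le_range) ?_
  refine Submodule.topologicalClosure_minimal _ ?_ (Submodule.isClosed_topologicalClosure _)
  calc LinearMap.range (D : K →ₗ[𝕜] K) = S.topologicalClosure.map (D : K →ₗ[𝕜] K) := by
        rw [hmin, Submodule.map_top]
    _ ≤ (S.map (D : K →ₗ[𝕜] K)).topologicalClosure := S.topologicalClosure_map D
    _ ≤ (H.map (D : K →ₗ[𝕜] K)).topologicalClosure := Submodule.topologicalClosure_mono hS

end

theorem defect_spaces_unitarily_equivalent_general
    {K : Type*} [NormedAddCommGroup K] [InnerProductSpace ℂ K] [CompleteSpace K]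
    (H : Submodule ℂ K) [CompleteSpace H]
    (P DPs : H →L[ℂ] H) (V DVs : K →L[ℂ] K)
    (hV : adjoint V ∘L V = 1)
    (hdil : ∀ (n : ℕ) (h : H), Submodule.orthogonalProjectionOnto H ((V ^ n) (h : K)) = (P ^ n) h)
    (hmin : (Submodule.span ℂ {x : K | ∃ (n : ℕ) (h : H), x = (V ^ n) (h : K)}).topologicalClosure = ⊤)
    (hDPspos : DPs.IsPositive) (hDPs : DPs ∘L DPs = 1 - P ∘L adjoint P)
    (hDVspos : DVs.IsPositive) (hDVs : DVs ∘L DVs = 1 - V ∘L adjoint V) :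
    Nonempty
      (↥(LinearMap.range (DPs : H →ₗ[ℂ] H)).topologicalClosure ≃ₗᵢ[ℂ]
       ↥(LinearMap.range (DVs : K →ₗ[ℂ] K)).topologicalClosure) := by
  have hVP := adjoint_apply_coe_eq_of_minimal_dilation hdil hmin
  have hDV : DVs ∘L V = 0 := hDVspos.isSelfAdjoint.mul_eq_zero_of_mul_self_eq_one_sub_mul_star
    (by rwa [star_eq_adjoint]) (by rwa [star_eq_adjoint])
  have hnorm (h : H) : ‖(DVs : K →ₗ[ℂ] K).domRestrict H h‖ = ‖DPs h‖ := by
    rw [← sq_eq_sq₀ (norm_nonneg _) (norm_nonneg _), LinearMap.domRestrict_apply, coe_coe,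
      hDVspos.isSelfAdjoint.norm_apply_sq_of_comp_self_eq_one_sub hDVs,
      hDPspos.isSelfAdjoint.norm_apply_sq_of_comp_self_eq_one_sub hDPs, hVP,
      Submodule.coe_norm, Submodule.coe_norm]
  obtain ⟨e⟩ := LinearMap.nonempty_topologicalClosure_range_linearIsometryEquiv_of_norm_eq
    (DPs : H →ₗ[ℂ] H) ((DVs : K →ₗ[ℂ] K).domRestrict H) hnorm
  rw [LinearMap.range_domRestrict, topologicalClosure_map_eq_of_comp_eq_zero hDV hmin] at e
  exact ⟨e⟩

theorem defect_spaces_unitarily_equivalent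
    {K : Type*} [NormedAddCommGroup K] [InnerProductSpace ℂ K] [CompleteSpace K]
    (H : Submodule ℂ K) [CompleteSpace H]
    (P DPs : H →L[ℂ] H) (V DVs : K →L[ℂ] K)
    (hP : ‖P‖ ≤ 1)
    (hV : adjoint V ∘L V = 1)
    (hdil : ∀ (n : ℕ) (h : H), Submodule.orthogonalProjectionOnto H ((V ^ n) (h : K)) = (P ^ n) h)
    (hmin : (Submodule.span ℂ {x : K | ∃ (n : ℕ) (h : H), x = (V ^ n) (h : K)}).topologicalClosure = ⊤)
    (hDPspos : DPs.IsPositive) (hDPs : DPs ∘L DPs = 1 - P ∘L adjoint P)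
    (hDVspos : DVs.IsPositive) (hDVs : DVs ∘L DVs = 1 - V ∘L adjoint V) :
    Nonempty
      (↥(LinearMap.range (DPs : H →ₗ[ℂ] H)).topologicalClosure ≃ₗᵢ[ℂ]
       ↥(LinearMap.range (DVs : K →ₗ[ℂ] K)).topologicalClosure) :=
  defect_spaces_unitarily_equivalent_general H P DPs V DVs hV hdil hmin hDPspos hDPs hDVspos hDVs
end

section
/- Let P be a contraction on H and V an isometry on K ⊇ H that is a minimal isometric dilation of P. Then for all h ∈ H, ‖(I - PP*)^{1/2} h‖ = ‖(I - VV*)^{1/2} h‖. -/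
/-!
Both squared defect norms are `‖h‖² - ‖T† h‖²` with `T = P` resp. `V`, so it suffices that `V† h = P† h`
for `h ∈ H`. The difference `V† h - P† h` is orthogonal to every `Vⁿ h'`, since
`⟪Vⁿ h', V† h⟫ = ⟪Vⁿ⁺¹ h', h⟫ = ⟪Pⁿ⁺¹ h', h⟫ = ⟪Pⁿ h', P† h⟫ = ⟪Vⁿ h', P† h⟫`,
and by minimality these vectors span a dense subspace.
-/

open ContinuousLinearMap

open scoped InnerProductSpace

namespace ContinuousLinearMap

variable {𝕜 E F : Type*} [RCLike 𝕜]
  [NormedAddCommGroup E] [InnerProductSpace 𝕜 E] [CompleteSpace E]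
  [NormedAddCommGroup F] [InnerProductSpace 𝕜 F] [CompleteSpace F]

theorem norm_sq_apply_eq_sub_of_mul_self_eq_one_sub {D : E →L[𝕜] E} (hD : IsSelfAdjoint D)
    {T : F →L[𝕜] E} (hDT : D ∘L D = 1 - T ∘L adjoint T) (x : E) :
    ‖D x‖ ^ 2 = ‖x‖ ^ 2 - ‖adjoint T x‖ ^ 2 := by
  rw [apply_norm_sq_eq_inner_adjoint_right, hD.adjoint_eq, hDT,
    apply_norm_sq_eq_inner_adjoint_right, adjoint_adjoint, sub_apply, one_apply_eq_self,
    inner_sub_right, map_sub, inner_self_eq_norm_sq]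

end ContinuousLinearMap

namespace Submodule

variable {𝕜 E : Type*} [RCLike 𝕜] [NormedAddCommGroup E] [InnerProductSpace 𝕜 E]

theorem eq_zero_of_inner_right_of_topologicalClosure_span_eq_top [CompleteSpace E] {s : Set E}
    (hs : (span 𝕜 s).topologicalClosure = ⊤) {x : E} (hx : ∀ v ∈ s, ⟪v, x⟫_𝕜 = 0) : x = 0 := by
  have hortho : span 𝕜 s ⟂ 𝕜 ∙ x := isOrtho_span.mpr fun u hu v hv ↦ by
    rw [Set.mem_singleton_iff.mp hv]; exact hx u hu
  have : x ∈ (span 𝕜 s)ᗮ := hortho.symm (mem_span_singleton_self x)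
  rwa [topologicalClosure_eq_top_iff.mp hs, mem_bot] at this

variable (H : Submodule 𝕜 E) [H.HasOrthogonalProjection]

theorem inner_coe_eq_of_orthogonalProjectionOnto_eq {T : E →L[𝕜] E} {A : H →L[𝕜] H}
    (hTA : ∀ x : H, H.orthogonalProjectionOnto (T x) = A x) (x y : H) :
    ⟪T x, y⟫_𝕜 = ⟪A x, y⟫_𝕜 := by
  rw [← inner_orthogonalProjectionOnto_eq_of_mem_right, hTA, coe_inner]

end Submodule

section Dilation

variable {𝕜 E : Type*} [RCLike 𝕜] [NormedAddCommGroup E] [InnerProductSpace 𝕜 E] [CompleteSpace E]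
  {H : Submodule 𝕜 E} [CompleteSpace H] {P : H →L[𝕜] H} {V : E →L[𝕜] E}

theorem inner_pow_apply_adjoint_eq_of_dilation
    (hdil : ∀ (n : ℕ) (h : H), H.orthogonalProjectionOnto ((V ^ n) (h : E)) = (P ^ n) h)
    (n : ℕ) (x y : H) :
    ⟪(V ^ n) (x : E), adjoint V (y : E)⟫_𝕜 = ⟪(V ^ n) (x : E), ((adjoint P y : H) : E)⟫_𝕜 := by
  have hcompr (m : ℕ) := H.inner_coe_eq_of_orthogonalProjectionOnto_eq (hdil m)
  calc ⟪(V ^ n) (x : E), adjoint V (y : E)⟫_𝕜 = ⟪(V ^ (n + 1)) (x : E), (y : E)⟫_𝕜 := by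
        rw [adjoint_inner_right, pow_succ']; rfl
    _ = ⟪(P ^ (n + 1)) x, y⟫_𝕜 := hcompr (n + 1) x y
    _ = ⟪(P ^ n) x, adjoint P y⟫_𝕜 := by
        rw [adjoint_inner_right, pow_succ']; rfl
    _ = ⟪(V ^ n) (x : E), ((adjoint P y : H) : E)⟫_𝕜 := (hcompr n x _).symm

theorem adjoint_apply_coe_eq_of_dilation
    (hdil : ∀ (n : ℕ) (h : H), H.orthogonalProjectionOnto ((V ^ n) (h : E)) = (P ^ n) h)
    (hmin : (Submodule.span 𝕜 {x : E | ∃ (n : ℕ) (h : H), x = (V ^ n) (h : E)}).topologicalClosure = ⊤)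
    (y : H) : adjoint V (y : E) = ((adjoint P y : H) : E) := by
  refine sub_eq_zero.mp (Submodule.eq_zero_of_inner_right_of_topologicalClosure_span_eq_top hmin ?_)
  rintro _ ⟨n, x, rfl⟩
  rw [inner_sub_right, inner_pow_apply_adjoint_eq_of_dilation hdil, sub_self]

end Dilation

theorem defect_norms_equal_on_H_general
    {K : Type*} [NormedAddCommGroup K] [InnerProductSpace ℂ K] [CompleteSpace K]
    (H : Submodule ℂ K) [CompleteSpace H]
    (P DPs : H →L[ℂ] H) (V DVs : K →L[ℂ] K)
    (hdil : ∀ (n : ℕ) (h : H), H.orthogonalProjectionOnto ((V ^ n) (h : K)) = (P ^ n) h)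
    (hmin : (Submodule.span ℂ {x : K | ∃ (n : ℕ) (h : H), x = (V ^ n) (h : K)}).topologicalClosure = ⊤)
    (hDPspos : DPs.IsPositive) (hDPs : DPs ∘L DPs = 1 - P ∘L adjoint P)
    (hDVspos : DVs.IsPositive) (hDVs : DVs ∘L DVs = 1 - V ∘L adjoint V) :
    ∀ h : H, ‖DPs h‖ = ‖DVs (h : K)‖ := by
  intro h
  rw [← sq_eq_sq₀ (norm_nonneg _) (norm_nonneg _),
    norm_sq_apply_eq_sub_of_mul_self_eq_one_sub hDPspos.isSelfAdjoint hDPs,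
    norm_sq_apply_eq_sub_of_mul_self_eq_one_sub hDVspos.isSelfAdjoint hDVs,
    adjoint_apply_coe_eq_of_dilation hdil hmin, Submodule.coe_norm, Submodule.coe_norm]

theorem defect_norms_equal_on_H
    {K : Type*} [NormedAddCommGroup K] [InnerProductSpace ℂ K] [CompleteSpace K]
    (H : Submodule ℂ K) [CompleteSpace H]
    (P DPs : H →L[ℂ] H) (V DVs : K →L[ℂ] K)
    (hP : ‖P‖ ≤ 1)
    (hV : adjoint V ∘L V = 1)
    (hdil : ∀ (n : ℕ) (h : H), H.orthogonalProjectionOnto ((V ^ n) (h : K)) = (P ^ n) h)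
    (hmin : (Submodule.span ℂ {x : K | ∃ (n : ℕ) (h : H), x = (V ^ n) (h : K)}).topologicalClosure = ⊤)
    (hDPspos : DPs.IsPositive) (hDPs : DPs ∘L DPs = 1 - P ∘L adjoint P)
    (hDVspos : DVs.IsPositive) (hDVs : DVs ∘L DVs = 1 - V ∘L adjoint V) :
    ∀ h : H, ‖DPs h‖ = ‖DVs (h : K)‖ :=
  defect_norms_equal_on_H_general H P DPs V DVs hdil hmin hDPspos hDPs hDVspos hDVs
end

section
/- Let S, P be commuting bounded operators on H, F a bounded operator on 𝒟_P with S - S*P = D_P F D_P, and F_* a bounded operator on 𝒟_{P*} with S* - S P* = D_{P*} F_* D_{P*}, where ‖P‖ ≤ 1. Then P F = F_** P on 𝒟_P (i.e., P F D_P h = F_** P D_P h for all h ∈ H, as vectors in 𝒟_{P*}). -/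
/-!
The defect operators satisfy `P D_P = D_{P*} P`: `P` intertwines `D_P² = I - P*P` with
`D_{P*}² = I - PP*`, hence (continuous functional calculus) their positive square roots.
With `SP = PS` the two fundamental equations then give `D_{P*} P F D_P = D_{P*} F_** P D_P`.
Both `P F D_P h` and `F_** P D_P h` lie in `𝒟_{P*}`, on which `D_{P*}` is injective since
`ker D_{P*} = (Ran D_{P*})ᗮ`.
-/

open ContinuousLinearMap

theorem SemiconjBy.cfc_real {A : Type*} [Ring A] [StarRing A] [Algebra ℝ A] [TopologicalSpace A]
    [ContinuousFunctionalCalculus ℝ A IsSelfAdjoint] [IsTopologicalRing A] [T2Space A]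
    {a b x : A} (h : SemiconjBy x a b) (f : ℝ → ℝ)
    (ha : IsSelfAdjoint a := by cfc_tac) (hb : IsSelfAdjoint b := by cfc_tac)
    (hfa : ContinuousOn f (spectrum ℝ a) := by cfc_cont_tac)
    (hfb : ContinuousOn f (spectrum ℝ b) := by cfc_cont_tac) :
    SemiconjBy x (cfc f a) (cfc f b) := by
  have hca : IsCompact (spectrum ℝ a) := ContinuousFunctionalCalculus.isCompact_spectrum a
  have hcb : IsCompact (spectrum ℝ b) := ContinuousFunctionalCalculus.isCompact_spectrum b
  set s := spectrum ℝ a ∪ spectrum ℝ b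
  have : CompactSpace s := isCompact_iff_compactSpace.mp (hca.union hcb)
  let ia : C(spectrum ℝ a, s) := ⟨Set.inclusion Set.subset_union_left, continuous_inclusion _⟩
  let ib : C(spectrum ℝ b, s) := ⟨Set.inclusion Set.subset_union_right, continuous_inclusion _⟩
  suffices key : ∀ g : C(s, ℝ), SemiconjBy x (cfcHom ha (g.comp ia)) (cfcHom hb (g.comp ib)) by
    have hf : ContinuousOn f s := hfa.union_of_isClosed hfb hca.isClosed hcb.isClosed
    rw [cfc_apply f a, cfc_apply f b]
    exact key ⟨s.domRestrict f, hf.domRestrict⟩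
  -- By Stone–Weierstrass it suffices that the `g` with `x g(a) = g(b) x` form a closed subalgebra
  -- of `C(σ(a) ∪ σ(b), ℝ)` containing the identity.
  have hid : SemiconjBy x (cfcHom ha ((ContinuousMap.restrict s (.id ℝ)).comp ia))
      (cfcHom hb ((ContinuousMap.restrict s (.id ℝ)).comp ib)) := by
    change SemiconjBy x (cfcHom ha (.restrict _ (.id ℝ))) (cfcHom hb (.restrict _ (.id ℝ)))
    rwa [cfcHom_id ha, cfcHom_id hb]
  intro g
  induction g using ContinuousMap.induction_on_of_compact with
  | const r =>
    change SemiconjBy x (cfcHom ha (algebraMap ℝ _ r)) (cfcHom hb (algebraMap ℝ _ r))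
    rw [AlgHomClass.commutes, AlgHomClass.commutes]
    exact Algebra.commute_algebraMap_right r x
  | id => exact hid
  | star_id => rwa [star_trivial]
  | add f g hf hg => simpa only [ContinuousMap.add_comp, map_add] using hf.add_right hg
  | mul f g hf hg => simpa only [ContinuousMap.mul_comp, map_mul] using hf.mul_right hg
  | frequently f h =>
    refine h.mem_of_closed (isClosed_eq ?_ ?_) <;> fun_prop

theorem SemiconjBy.of_mul_self {A : Type*} [CStarAlgebra A] [PartialOrder A] [StarOrderedRing A]
    {x c d : A} (hc : 0 ≤ c) (hd : 0 ≤ d) (h : SemiconjBy x (c * c) (d * d)) :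
    SemiconjBy x c d := by
  have key := h.cfc_real Real.sqrt
  rwa [← cfcₙ_eq_cfc, ← cfcₙ_eq_cfc,
    ← CFC.sqrt_eq_real_sqrt _ hc.isSelfAdjoint.mul_self_nonneg,
    ← CFC.sqrt_eq_real_sqrt _ hd.isSelfAdjoint.mul_self_nonneg,
    CFC.sqrt_mul_self c, CFC.sqrt_mul_self d] at key

theorem semiconjBy_defect {A : Type*} [CStarAlgebra A] [PartialOrder A] [StarOrderedRing A]
    {p d ds : A} (hd : 0 ≤ d) (hds : 0 ≤ ds) (hd2 : d * d = 1 - star p * p)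
    (hds2 : ds * ds = 1 - p * star p) : SemiconjBy p d ds :=
  .of_mul_self hd hds <| by
    rw [SemiconjBy, hd2, hds2]
    noncomm_ring

namespace ContinuousLinearMap

variable {𝕜 E F : Type*} [RCLike 𝕜]

theorem apply_mem_closure_range_of_comp_eq [NormedAddCommGroup E] [NormedSpace 𝕜 E]
    [NormedAddCommGroup F] [NormedSpace 𝕜 F] {T : E →L[𝕜] F} {A : E →L[𝕜] E} {B : F →L[𝕜] F}
    (h : T ∘L A = B ∘L T) {y : E}
    (hy : y ∈ (LinearMap.range (A : E →ₗ[𝕜] E)).topologicalClosure) :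
    T y ∈ (LinearMap.range (B : F →ₗ[𝕜] F)).topologicalClosure := by
  rw [← SetLike.mem_coe, Submodule.topologicalClosure_coe] at hy ⊢
  refine map_mem_closure T.continuous hy ?_
  rintro _ ⟨x, rfl⟩
  exact ⟨T x, congr($h.symm x)⟩

variable [NormedAddCommGroup E] [InnerProductSpace 𝕜 E] [CompleteSpace E]
  [NormedAddCommGroup F] [InnerProductSpace 𝕜 F] [CompleteSpace F]

theorem adjoint_apply_mem_of_orthogonal_le_ker {T : E →L[𝕜] F} {K : Submodule 𝕜 E}
    (hK : IsClosed (K : Set E)) (hT : ∀ x ∈ Kᗮ, T x = 0) (y : F) : adjoint T y ∈ K := by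
  have hker : (LinearMap.ker (T : E →ₗ[𝕜] F))ᗮ ≤ Kᗮᗮ :=
    Submodule.orthogonal_le fun x hx => hT x hx
  rw [Submodule.orthogonal_orthogonal_eq_closure, hK.submodule_topologicalClosure_eq] at hker
  refine hker ?_
  rw [orthogonal_ker]
  exact Submodule.le_topologicalClosure _ ⟨y, rfl⟩

theorem _root_.IsSelfAdjoint.injOn_closure_range {D : E →L[𝕜] E} (hD : IsSelfAdjoint D) :
    Set.InjOn D (LinearMap.range (D : E →ₗ[𝕜] E)).topologicalClosure := by
  intro u hu v hv huv
  set K := LinearMap.range (D : E →ₗ[𝕜] E)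
  have h_ortho : u - v ∈ Kᗮ := by
    rw [orthogonal_range, hD.adjoint_eq, LinearMap.mem_ker, map_sub, coe_coe, huv, sub_self]
  have h_closure : u - v ∈ Kᗮᗮ := by
    rw [Submodule.orthogonal_orthogonal_eq_closure]
    exact sub_mem hu hv
  rw [← sub_eq_zero, ← Submodule.mem_bot 𝕜, ← Kᗮ.inf_orthogonal_eq_bot]
  exact ⟨h_ortho, h_closure⟩

end ContinuousLinearMap

theorem fundamental_operators_intertwine_P_general
    {H : Type*} [NormedAddCommGroup H] [InnerProductSpace ℂ H] [CompleteSpace H]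
    (S P DP DPs F Fs : H →L[ℂ] H)
    (hcomm : S ∘L P = P ∘L S)
    (hDPpos : DP.IsPositive) (hDP : DP ∘L DP = 1 - adjoint P ∘L P)
    (hDPspos : DPs.IsPositive) (hDPs : DPs ∘L DPs = 1 - P ∘L adjoint P)
    -- F is an operator on the defect space 𝒟_P = closure Ran D_P, extended by zero
    (hFran : ∀ x : H, F x ∈ (LinearMap.range (DP : H →ₗ[ℂ] H)).topologicalClosure)
    -- F_* is an operator on 𝒟_{P*}, extended by zero
    (hFsker : ∀ x ∈ ((LinearMap.range (DPs : H →ₗ[ℂ] H)).topologicalClosure)ᗮ, Fs x = 0)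
    (hF : S - adjoint S ∘L P = DP ∘L F ∘L DP)
    (hFs : adjoint S - S ∘L adjoint P = DPs ∘L Fs ∘L DPs) :
    ∀ h : H, P (F (DP h)) = (adjoint Fs) (P (DP h)) := by
  have hPD : P * DP = DPs * P :=
    semiconjBy_defect ((nonneg_iff_isPositive DP).2 hDPpos)
      ((nonneg_iff_isPositive DPs).2 hDPspos) hDP hDPs
  have hcomm : S * P = P * S := hcomm
  have hF : S - adjoint S * P = DP * (F * DP) := hF
  have hFs : adjoint S - S * adjoint P = DPs * (Fs * DPs) := hFs
  have hFs' : S - P * adjoint S = DPs * adjoint Fs * DPs := by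
    have := congr(star $hFs)
    simp only [star_sub, star_mul, star_eq_adjoint, adjoint_adjoint,
      hDPspos.isSelfAdjoint.adjoint_eq] at this
    rw [this, mul_assoc]
  have hcore : DPs * (P * F * DP) = DPs * (adjoint Fs * P * DP) :=
    calc DPs * (P * F * DP) = P * (DP * F * DP) := by
          rw [← mul_assoc, ← mul_assoc, ← hPD]; noncomm_ring
      _ = P * (S - adjoint S * P) := by rw [hF, mul_assoc]
      _ = (S - P * adjoint S) * P := by rw [mul_sub, sub_mul, hcomm]; noncomm_ring
      _ = DPs * (adjoint Fs * P * DP) := by rw [hFs', mul_assoc, ← hPD]; noncomm_ring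
  intro h
  refine hDPspos.isSelfAdjoint.injOn_closure_range ?_ ?_ congr($hcore h)
  · exact apply_mem_closure_range_of_comp_eq hPD (hFran (DP h))
  · exact adjoint_apply_mem_of_orthogonal_le_ker (Submodule.isClosed_topologicalClosure _) hFsker _

theorem fundamental_operators_intertwine_P
    {H : Type*} [NormedAddCommGroup H] [InnerProductSpace ℂ H] [CompleteSpace H]
    (S P DP DPs F Fs : H →L[ℂ] H)
    (hcomm : S ∘L P = P ∘L S) (hP : ‖P‖ ≤ 1)
    (hDPpos : DP.IsPositive) (hDP : DP ∘L DP = 1 - adjoint P ∘L P)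
    (hDPspos : DPs.IsPositive) (hDPs : DPs ∘L DPs = 1 - P ∘L adjoint P)
    -- F is an operator on the defect space 𝒟_P = closure Ran D_P, extended by zero
    (hFran : ∀ x : H, F x ∈ (LinearMap.range (DP : H →ₗ[ℂ] H)).topologicalClosure)
    (hFker : ∀ x ∈ ((LinearMap.range (DP : H →ₗ[ℂ] H)).topologicalClosure)ᗮ, F x = 0)
    -- F_* is an operator on 𝒟_{P*}, extended by zero
    (hFsran : ∀ x : H, Fs x ∈ (LinearMap.range (DPs : H →ₗ[ℂ] H)).topologicalClosure)
    (hFsker : ∀ x ∈ ((LinearMap.range (DPs : H →ₗ[ℂ] H)).topologicalClosure)ᗮ, Fs x = 0)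
    (hF : S - adjoint S ∘L P = DP ∘L F ∘L DP)
    (hFs : adjoint S - S ∘L adjoint P = DPs ∘L Fs ∘L DPs) :
    ∀ h : H, P (F (DP h)) = (adjoint Fs) (P (DP h)) :=
  fundamental_operators_intertwine_P_general S P DP DPs F Fs hcomm hDPpos hDP hDPspos hDPs hFran
    hFsker hF hFs
end

section
/- With the hypotheses above (F and F_* the fundamental operators of (S,P) and (S*,P*)), the intertwining relation D_P S = F D_P + F* D_P P holds as operators from H to 𝒟_P. -/
open ContinuousLinearMap

/-!
Combining the defining identity of `F`, its adjoint, `D_P² = I - P*P` and `SP = PS` gives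
`D_P (D_P S - F D_P - F* D_P P) = 0`. So the defect lies in `ker D_P = (ran D_P)ᗮ`; since `F`
is supported on the closure of `ran D_P`, so is `F*`, and the defect also lies in that closure.
Hence it vanishes.
-/

section

variable {𝕜 E F : Type*} [RCLike 𝕜] [NormedAddCommGroup E] [InnerProductSpace 𝕜 E] [CompleteSpace E]
  [NormedAddCommGroup F] [InnerProductSpace 𝕜 F] [CompleteSpace F]

theorem IsSelfAdjoint.eq_zero_of_mem_closure_range_of_apply_eq_zero {T : E →L[𝕜] E}
    (hT : IsSelfAdjoint T) {v : E} (hv : v ∈ (LinearMap.range (T : E →ₗ[𝕜] E)).topologicalClosure)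
    (hTv : T v = 0) : v = 0 := by
  have hvperp : v ∈ (LinearMap.range (T : E →ₗ[𝕜] E)).topologicalClosureᗮ := by
    rw [Submodule.orthogonal_closure, T.orthogonal_range, hT.adjoint_eq]
    exact hTv
  exact Submodule.disjoint_def.mp (Submodule.orthogonal_disjoint _) v hv hvperp

theorem ContinuousLinearMap.adjoint_apply_mem_of_forall_mem_orthogonal_apply_eq_zero
    {T : E →L[𝕜] F} {K : Submodule 𝕜 E} [K.HasOrthogonalProjection]
    (hT : ∀ x ∈ Kᗮ, T x = 0) (y : F) : adjoint T y ∈ K := by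
  rw [← K.orthogonal_orthogonal, Submodule.mem_orthogonal]
  intro x hx
  rw [adjoint_inner_right, hT x hx, inner_zero_left]

end

theorem mul_sub_sub_star_mul_mul_eq_zero {R : Type*} [Ring R] [StarRing R] {S P D F : R}
    (hcomm : S * P = P * S) (hD : IsSelfAdjoint D) (hDD : D * D = 1 - star P * P)
    (hF : S - star S * P = D * F * D) :
    D * (D * S - F * D - star F * D * P) = 0 := by
  have hFs : star S - star P * S = D * star F * D := by
    simpa [star_sub, star_mul, hD.star_eq, mul_assoc] using congrArg star hF
  calc D * (D * S - F * D - star F * D * P)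
      = D * D * S - D * F * D - D * star F * D * P := by noncomm_ring
    _ = star P * (S * P - P * S) := by rw [hDD, ← hF, ← hFs]; noncomm_ring
    _ = 0 := by rw [hcomm, sub_self, mul_zero]

theorem DP_S_eq_F_DP_add_Fstar_DP_P_general
    {H : Type*} [NormedAddCommGroup H] [InnerProductSpace ℂ H] [CompleteSpace H]
    (S P DP F : H →L[ℂ] H)
    (hcomm : S ∘L P = P ∘L S)
    (hDPpos : DP.IsPositive) (hDP : DP ∘L DP = 1 - adjoint P ∘L P)
    (hFran : ∀ x : H, F x ∈ (LinearMap.range (DP : H →ₗ[ℂ] H)).topologicalClosure)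
    (hFker : ∀ x ∈ ((LinearMap.range (DP : H →ₗ[ℂ] H)).topologicalClosure)ᗮ, F x = 0)
    (hF : S - adjoint S ∘L P = DP ∘L F ∘L DP) :
    ∀ h : H, DP (S h) = F (DP h) + (adjoint F) (DP (P h)) := by
  intro h
  have hdefect : DP * (DP * S - F * DP - star F * DP * P) = 0 :=
    mul_sub_sub_star_mul_mul_eq_zero hcomm hDPpos.isSelfAdjoint hDP hF
  have hmem : (DP * S - F * DP - star F * DP * P) h ∈
      (LinearMap.range (DP : H →ₗ[ℂ] H)).topologicalClosure :=
    sub_mem (sub_mem (Submodule.le_topologicalClosure _ ⟨S h, rfl⟩) (hFran _))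
      (adjoint_apply_mem_of_forall_mem_orthogonal_apply_eq_zero hFker _)
  have hzero := hDPpos.isSelfAdjoint.eq_zero_of_mem_closure_range_of_apply_eq_zero hmem
    (congrArg (· h) hdefect)
  simpa [sub_sub, sub_eq_zero, star_eq_adjoint] using hzero

theorem DP_S_eq_F_DP_add_Fstar_DP_P
    {H : Type*} [NormedAddCommGroup H] [InnerProductSpace ℂ H] [CompleteSpace H]
    (S P DP DPs F Fs : H →L[ℂ] H)
    (hcomm : S ∘L P = P ∘L S) (hP : ‖P‖ ≤ 1)
    (hDPpos : DP.IsPositive) (hDP : DP ∘L DP = 1 - adjoint P ∘L P)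
    (hDPspos : DPs.IsPositive) (hDPs : DPs ∘L DPs = 1 - P ∘L adjoint P)
    (hFran : ∀ x : H, F x ∈ (LinearMap.range (DP : H →ₗ[ℂ] H)).topologicalClosure)
    (hFker : ∀ x ∈ ((LinearMap.range (DP : H →ₗ[ℂ] H)).topologicalClosure)ᗮ, F x = 0)
    (hFsran : ∀ x : H, Fs x ∈ (LinearMap.range (DPs : H →ₗ[ℂ] H)).topologicalClosure)
    (hFsker : ∀ x ∈ ((LinearMap.range (DPs : H →ₗ[ℂ] H)).topologicalClosure)ᗮ, Fs x = 0)
    (hF : S - adjoint S ∘L P = DP ∘L F ∘L DP)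
    (hFs : adjoint S - S ∘L adjoint P = DPs ∘L Fs ∘L DPs) :
    ∀ h : H, DP (S h) = F (DP h) + (adjoint F) (DP (P h)) :=
  DP_S_eq_F_DP_add_Fstar_DP_P_general S P DP F hcomm hDPpos hDP hFran hFker hF
end

section
/- With F and F_* the fundamental operators of (S,P) and (S*,P*) respectively, the relation D_{P*} F_* = S* D_{P*} - D_P F P* holds as operators from 𝒟_{P*} to H. -/
/-!
Taking square roots in `P* (I - PP*) = (I - P*P) P*` gives `P* D_{P*} = D_P P*`. With it, both
sides of the identity, evaluated at `D_{P*} y`, reduce to `(S* - S P*) y` by the defining equations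
of `F_*` and `F`; continuity extends the identity to the closure of the range of `D_{P*}`.
-/

open ContinuousLinearMap

theorem Commute.of_commute_mul_self {A : Type*} [CStarAlgebra A] [PartialOrder A]
    [StarOrderedRing A] {x d : A} (hd : 0 ≤ d) (h : Commute x (d * d)) : Commute x d := by
  have := (h.symm.cfcₙ_nnreal NNReal.sqrt).symm
  change Commute x (CFC.sqrt (d * d)) at this
  rwa [CFC.sqrt_mul_self d] at this

namespace ContinuousLinearMap

/-- Berberian's trick: `T` intertwines `a` and `b` iff `[[0, T], [0, 0]]` commutes with
`diag b a` on `H ⊕ H`, so the claim reduces to `Commute.of_commute_mul_self`. -/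
theorem comp_eq_comp_of_comp_mul_self_eq {H : Type*} [NormedAddCommGroup H]
    [InnerProductSpace ℂ H] [CompleteSpace H] {T a b : H →L[ℂ] H} (ha : a.IsPositive)
    (hb : b.IsPositive) (h : T ∘L (a ∘L a) = (b ∘L b) ∘L T) : T ∘L a = b ∘L T := by
  let e := WithLp.prodContinuousLinearEquiv 2 ℂ H H
  let lift : (H × H →L[ℂ] H × H) → (WithLp 2 (H × H) →L[ℂ] WithLp 2 (H × H)) :=
    fun M => (e.symm : H × H →L[ℂ] _) ∘L M ∘L (e : _ →L[ℂ] H × H)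
  have lift_mul (M N : H × H →L[ℂ] H × H) : lift M * lift N = lift (M ∘L N) := by
    ext z; rfl
  let D := lift (b.prodMap a)
  let X := lift ((T ∘L snd ℂ H H).prod 0)
  have hD : 0 ≤ D := by
    rw [nonneg_iff_isPositive, isPositive_iff_complex]
    intro z
    have hz : inner ℂ (D z) z = inner ℂ (b z.fst) z.fst + inner ℂ (a z.snd) z.snd := rfl
    obtain ⟨hb₁, hb₂⟩ := (isPositive_iff_complex b).mp hb z.fst
    obtain ⟨ha₁, ha₂⟩ := (isPositive_iff_complex a).mp ha z.snd
    rw [hz, map_add, Complex.ofReal_add, hb₁, ha₁]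
    exact ⟨rfl, add_nonneg hb₂ ha₂⟩
  have hXD : Commute X (D * D) := by
    rw [Commute, SemiconjBy, lift_mul, lift_mul, lift_mul]
    congr 1
    ext z
    all_goals simp
    simpa using congr($h z)
  ext y
  exact congr(WithLp.fst ($((Commute.of_commute_mul_self hD hXD).eq) (e.symm (0, y))))

theorem eqOn_topologicalClosure_range_of_comp_eq {R E F G : Type*} [Semiring R]
    [AddCommMonoid E] [Module R E] [TopologicalSpace E] [ContinuousAdd E] [ContinuousConstSMul R E]
    [AddCommMonoid F] [Module R F] [TopologicalSpace F] [T2Space F]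
    [AddCommMonoid G] [Module R G] [TopologicalSpace G]
    {T U : E →L[R] F} {V : G →L[R] E} (h : T ∘L V = U ∘L V) :
    Set.EqOn T U (LinearMap.range (V : G →ₗ[R] E)).topologicalClosure := by
  rw [Submodule.topologicalClosure_coe]
  refine Set.EqOn.closure ?_ T.continuous U.continuous
  rintro _ ⟨y, rfl⟩
  exact congr($h y)

end ContinuousLinearMap

theorem DPs_Fs_eq_Sstar_DPs_sub_DP_F_Pstar_general
    {H : Type*} [NormedAddCommGroup H] [InnerProductSpace ℂ H] [CompleteSpace H]
    (S P DP DPs F Fs : H →L[ℂ] H)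
    (hDPpos : DP.IsPositive) (hDP : DP ∘L DP = 1 - adjoint P ∘L P)
    (hDPspos : DPs.IsPositive) (hDPs : DPs ∘L DPs = 1 - P ∘L adjoint P)
    (hF : S - adjoint S ∘L P = DP ∘L F ∘L DP)
    (hFs : adjoint S - S ∘L adjoint P = DPs ∘L Fs ∘L DPs) :
    ∀ x ∈ (LinearMap.range (DPs : H →ₗ[ℂ] H)).topologicalClosure,
      DPs (Fs x) = adjoint S (DPs x) - DP (F (adjoint P x)) := by
  have hIntertwine : adjoint P ∘L DPs = DP ∘L adjoint P := by
    refine comp_eq_comp_of_comp_mul_self_eq hDPspos hDPpos ?_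
    rw [hDPs, hDP]
    simp only [← mul_def]
    noncomm_ring
  refine eqOn_topologicalClosure_range_of_comp_eq (T := DPs ∘L Fs)
    (U := adjoint S ∘L DPs - DP ∘L F ∘L adjoint P) ?_
  calc (DPs ∘L Fs) ∘L DPs = adjoint S - S ∘L adjoint P := hFs.symm
    _ = adjoint S ∘L (DPs ∘L DPs) - (S - adjoint S ∘L P) ∘L adjoint P := by
      rw [hDPs]; simp only [← mul_def]; noncomm_ring
    _ = adjoint S ∘L (DPs ∘L DPs) - DP ∘L F ∘L (adjoint P ∘L DPs) := by
      rw [hF, hIntertwine]; simp only [comp_assoc]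
    _ = (adjoint S ∘L DPs - DP ∘L F ∘L adjoint P) ∘L DPs := by
      simp only [← mul_def]; noncomm_ring

theorem DPs_Fs_eq_Sstar_DPs_sub_DP_F_Pstar
    {H : Type*} [NormedAddCommGroup H] [InnerProductSpace ℂ H] [CompleteSpace H]
    (S P DP DPs F Fs : H →L[ℂ] H)
    (hcomm : S ∘L P = P ∘L S) (hP : ‖P‖ ≤ 1)
    (hDPpos : DP.IsPositive) (hDP : DP ∘L DP = 1 - adjoint P ∘L P)
    (hDPspos : DPs.IsPositive) (hDPs : DPs ∘L DPs = 1 - P ∘L adjoint P)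
    (hFran : ∀ x : H, F x ∈ (LinearMap.range (DP : H →ₗ[ℂ] H)).topologicalClosure)
    (hFker : ∀ x ∈ ((LinearMap.range (DP : H →ₗ[ℂ] H)).topologicalClosure)ᗮ, F x = 0)
    (hFsran : ∀ x : H, Fs x ∈ (LinearMap.range (DPs : H →ₗ[ℂ] H)).topologicalClosure)
    (hFsker : ∀ x ∈ ((LinearMap.range (DPs : H →ₗ[ℂ] H)).topologicalClosure)ᗮ, Fs x = 0)
    (hF : S - adjoint S ∘L P = DP ∘L F ∘L DP)
    (hFs : adjoint S - S ∘L adjoint P = DPs ∘L Fs ∘L DPs) :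
    ∀ x ∈ (LinearMap.range (DPs : H →ₗ[ℂ] H)).topologicalClosure,
      DPs (Fs x) = adjoint S (DPs x) - DP (F (adjoint P x)) :=
  DPs_Fs_eq_Sstar_DPs_sub_DP_F_Pstar_general S P DP DPs F Fs hDPpos hDP hDPspos hDPs hF hFs
end

section
/- With F, F_* as above, the relation F P* - P* F_** = F* D_P D_{P*} - D_P D_{P*} F_* holds, after pre- and post-multiplication by defect operators: D_P (F P* - P* F_**) D_{P*} = D_P F* D_P D_{P*}² - D_P² D_{P*} F_* D_{P*}. -/
/-!
Since `P (I - P*P) = (I - PP*) P`, `P` intertwines `D_P²` and `D_{P*}²`, hence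
also their positive square roots: `P D_P = D_{P*} P`. For the square roots this is seen on
`H ⊕ H`, where `[[0, 0], [P, 0]]` commutes with `(D_P ⊕ D_{P*})²` and therefore with its
square root `D_P ⊕ D_{P*}`. With this intertwining relation, the identity is a computation in a
star ring, in which the commutation `S P = P S` is the one nontrivial input.
-/

open ContinuousLinearMap

namespace ContinuousLinearMap

section BlockOperators

variable {𝕜 H K : Type*} [RCLike 𝕜] [NormedAddCommGroup H] [InnerProductSpace 𝕜 H]
  [NormedAddCommGroup K] [InnerProductSpace 𝕜 K]

noncomputable def toL2Prod (T : H × K →L[𝕜] H × K) : WithLp 2 (H × K) →L[𝕜] WithLp 2 (H × K) :=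
  ((WithLp.prodContinuousLinearEquiv 2 𝕜 H K).symm : H × K →L[𝕜] WithLp 2 (H × K)) ∘L T ∘L
    (WithLp.prodContinuousLinearEquiv 2 𝕜 H K : WithLp 2 (H × K) →L[𝕜] H × K)

theorem toL2Prod_comp (T U : H × K →L[𝕜] H × K) :
    toL2Prod T ∘L toL2Prod U = toL2Prod (T ∘L U) := by
  ext z; simp [toL2Prod]

theorem isPositive_toL2Prod_prodMap {a : H →L[𝕜] H} {b : K →L[𝕜] K}
    (ha : a.IsPositive) (hb : b.IsPositive) : (toL2Prod (a.prodMap b)).IsPositive := by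
  refine ⟨fun x y => ?_, fun x => ?_⟩
  · simp [toL2Prod, WithLp.prod_inner_apply, ha.inner_left_eq_inner_right,
      hb.inner_left_eq_inner_right]
  · have := add_nonneg (ha.re_inner_nonneg_left x.fst) (hb.re_inner_nonneg_left x.snd)
    simpa [toL2Prod, reApplyInnerSelf, WithLp.prod_inner_apply] using this

end BlockOperators

variable {H K : Type*} [NormedAddCommGroup H] [InnerProductSpace ℂ H] [CompleteSpace H]
  [NormedAddCommGroup K] [InnerProductSpace ℂ K] [CompleteSpace K]

set_option synthInstance.maxHeartbeats 100000 in
theorem comp_eq_comp_of_comp_mul_self {a : H →L[ℂ] H} {b : K →L[ℂ] K} (X : H →L[ℂ] K)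
    (ha : a.IsPositive) (hb : b.IsPositive) (h : X ∘L (a ∘L a) = (b ∘L b) ∘L X) :
    X ∘L a = b ∘L X := by
  set T := toL2Prod (a.prodMap b)
  set Y := toL2Prod (inr ℂ H K ∘L X ∘L fst ℂ H K)
  have hT : 0 ≤ T := (nonneg_iff_isPositive T).2 (isPositive_toL2Prod_prodMap ha hb)
  have hT2Y : Commute (T * T) Y := by
    simp only [commute_iff_eq, mul_def, T, Y, toL2Prod_comp]
    have h' (z : H) : X (a (a z)) = b (b (X z)) := congr($h z)
    congr 1
    ext z <;> simp [h']
  have hTY : Commute T Y := by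
    simpa only [← CFC.sqrt_eq_cfc, CFC.sqrt_mul_self T hT] using hT2Y.cfc_nnreal NNReal.sqrt
  ext u
  simpa [T, Y, toL2Prod] using congr(((($hTY.eq) (WithLp.toLp 2 (u, 0))).snd)).symm

end ContinuousLinearMap

section StarRing

variable {R : Type*} [Ring R] [StarRing R]

theorem defect_sandwich_identity {S P dp dps F Fs : R} (hcomm : Commute S P)
    (hdp : IsSelfAdjoint dp) (hdps : IsSelfAdjoint dps) (hPdp : P * dp = dps * P)
    (hdp2 : dp * dp = 1 - star P * P) (hdps2 : dps * dps = 1 - P * star P)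
    (hF : S - star S * P = dp * F * dp) (hFs : star S - S * star P = dps * Fs * dps) :
    dp * (F * star P - star P * star Fs) * dps =
      dp * star F * dp * (dps * dps) - dp * dp * (dps * Fs * dps) := by
  have hdpP : star P * dps = dp * star P := by
    simpa [hdp.star_eq, hdps.star_eq] using congr(star $hPdp).symm
  have hF' : star S - star P * S = dp * star F * dp := by
    simpa [hdp.star_eq, mul_assoc] using congr(star $hF)
  have hFs' : S - P * star S = dps * star Fs * dps := by
    simpa [hdps.star_eq, mul_assoc] using congr(star $hFs)
  calc dp * (F * star P - star P * star Fs) * dps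
      = dp * F * (star P * dps) - dp * star P * (star Fs * dps) := by noncomm_ring
    _ = dp * F * (dp * star P) - star P * dps * (star Fs * dps) := by rw [← hdpP]
    _ = (S - star S * P) * star P - star P * (S - P * star S) := by
      rw [hF, hFs']; noncomm_ring
    _ = (star S - star P * S) * (1 - P * star P) - (1 - star P * P) * (star S - S * star P)
          + star P * (P * S - S * P) * star P := by noncomm_ring
    _ = dp * star F * dp * (dps * dps) - dp * dp * (dps * Fs * dps) := by
      rw [← hcomm.eq, sub_self, mul_zero, zero_mul, add_zero, hF', hFs, hdp2, hdps2]

end StarRing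

theorem sandwiched_fundamental_identity_general
    {H : Type*} [NormedAddCommGroup H] [InnerProductSpace ℂ H] [CompleteSpace H]
    (S P DP DPs F Fs : H →L[ℂ] H)
    (hcomm : S ∘L P = P ∘L S)
    (hDPpos : DP.IsPositive) (hDP : DP ∘L DP = 1 - adjoint P ∘L P)
    (hDPspos : DPs.IsPositive) (hDPs : DPs ∘L DPs = 1 - P ∘L adjoint P)
    (hF : S - adjoint S ∘L P = DP ∘L F ∘L DP)
    (hFs : adjoint S - S ∘L adjoint P = DPs ∘L Fs ∘L DPs) :
    DP ∘L (F ∘L adjoint P - adjoint P ∘L adjoint Fs) ∘L DPs =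
      (DP ∘L adjoint F ∘L DP) ∘L (DPs ∘L DPs)
        - (DP ∘L DP) ∘L (DPs ∘L Fs ∘L DPs) := by
  have hPDP : P ∘L DP = DPs ∘L P := by
    refine comp_eq_comp_of_comp_mul_self P hDPpos hDPspos ?_
    rw [hDP, hDPs]
    simp only [← mul_def, ← star_eq_adjoint]
    noncomm_ring
  simp only [← mul_def, ← star_eq_adjoint] at *
  simpa only [mul_assoc] using defect_sandwich_identity hcomm hDPpos.isSelfAdjoint
    hDPspos.isSelfAdjoint hPDP hDP hDPs (by rw [hF, mul_assoc]) (by rw [hFs, mul_assoc])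

theorem sandwiched_fundamental_identity
    {H : Type*} [NormedAddCommGroup H] [InnerProductSpace ℂ H] [CompleteSpace H]
    (S P DP DPs F Fs : H →L[ℂ] H)
    (hcomm : S ∘L P = P ∘L S) (hP : ‖P‖ ≤ 1)
    (hDPpos : DP.IsPositive) (hDP : DP ∘L DP = 1 - adjoint P ∘L P)
    (hDPspos : DPs.IsPositive) (hDPs : DPs ∘L DPs = 1 - P ∘L adjoint P)
    (hF : S - adjoint S ∘L P = DP ∘L F ∘L DP)
    (hFs : adjoint S - S ∘L adjoint P = DPs ∘L Fs ∘L DPs) :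
    DP ∘L (F ∘L adjoint P - adjoint P ∘L adjoint Fs) ∘L DPs =
      (DP ∘L adjoint F ∘L DP) ∘L (DPs ∘L DPs)
        - (DP ∘L DP) ∘L (DPs ∘L Fs ∘L DPs) :=
  sandwiched_fundamental_identity_general S P DP DPs F Fs hcomm hDPpos hDP hDPspos hDPs hF hFs
end
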